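/- Let k ≥ 2 and r ≥ 1 be integers and let λ ∈ ℝ be a root of P^k_{r+2}. Define v on the vertices of X_r^k by v_γ = P^k_{r+1−m}(λ) whenever γ is at distance m from the root (0 ≤ m ≤ r). Then v is nonzero and A(X_r^k)v = λv; that is, v is an eigenvector of X_r^k with eigenvalue λ. -/
import Mathlib


open Polynomial

/-- Vertices of the rooted tree of depth `r` in which each vertex at depth `i < r`
has `b i` children: a vertex is a word assigning to each position `i < m ≤ r`
a letter in `Fin (b i)`; the empty word (`m = 0`) is the root, and the depth of a
vertex is its length `m`. -/
abbrev BVertex (b : ℕ → ℕ) (r : ℕ) := Σ m : Fin (r + 1), (i : Fin (m : ℕ)) → Fin (b i)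

/-- `y` is a child of `x`: the word `y` extends the word `x` by one letter. -/
def BExt {b : ℕ → ℕ} {r : ℕ} (x y : BVertex b r) : Prop :=
  ∃ h : (y.1 : ℕ) = (x.1 : ℕ) + 1,
    ∀ i : Fin (x.1 : ℕ), y.2 ⟨(i : ℕ), by have := i.isLt; omega⟩ = x.2 i

/-- Adjacency in the rooted tree: the parent/child relation. -/
def BAdj {b : ℕ → ℕ} {r : ℕ} (x y : BVertex b r) : Prop := BExt x y ∨ BExt y x

open Classical in
/-- Adjacency matrix of the rooted tree with branching sequence `b` and depth `r`. -/
noncomputable def BAdjMatrix (b : ℕ → ℕ) (r : ℕ) : Matrix (BVertex b r) (BVertex b r) ℝ :=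
  fun x y => if BAdj x y then 1 else 0

/-- `lam` is an eigenvalue of the adjacency matrix of the tree. -/
def IsAdjEigenvalue (b : ℕ → ℕ) (r : ℕ) (lam : ℝ) : Prop :=
  ∃ v : BVertex b r → ℝ, v ≠ 0 ∧ (BAdjMatrix b r).mulVec v = lam • v

/-- Dimension of the `lam`-eigenspace of the adjacency matrix of the tree. -/
noncomputable def adjEigDim (b : ℕ → ℕ) (r : ℕ) (lam : ℝ) : ℕ :=
  Module.finrank ℝ
    (LinearMap.ker ((BAdjMatrix b r).mulVecLin - lam • LinearMap.id))

/-- The generalized Fibonacci polynomials `P^k_n ∈ ℝ[x]`: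
`P^k_0 = 0`, `P^k_1 = 1`, `P^k_n = x·P^k_{n-1} − k·P^k_{n-2}`. -/
noncomputable def Ppoly (k : ℕ) : ℕ → Polynomial ℝ
  | 0 => 0
  | 1 => 1
  | n + 2 => X * Ppoly k (n + 1) - C (k : ℝ) * Ppoly k n

section Aux

variable {k r : ℕ}

lemma Ppoly_eval_rec (k : ℕ) (lam : ℝ) (n : ℕ) :
    (Ppoly k (n + 2)).eval lam =
      lam * (Ppoly k (n + 1)).eval lam - k * (Ppoly k n).eval lam := by
  simp [Ppoly]

/-- Extensionality for vertices. -/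
lemma bvertex_ext {x y : BVertex (fun _ => k) r} (h1 : (x.1 : ℕ) = (y.1 : ℕ))
    (h2 : ∀ i : ℕ, ∀ hx : i < (x.1 : ℕ), ∀ hy : i < (y.1 : ℕ),
      x.2 ⟨i, hx⟩ = y.2 ⟨i, hy⟩) : x = y := by
  obtain ⟨⟨m, hm⟩, u⟩ := x
  obtain ⟨⟨m', hm'⟩, w⟩ := y
  simp only [Fin.val_mk] at h1
  subst h1
  have hw : u = w := by
    funext i
    have := h2 i i.isLt i.isLt
    simpa using this
  subst hw
  rfl

/-- The `j`-th child of a non-leaf vertex. -/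
def bchild (x : BVertex (fun _ => k) r) (hx : (x.1 : ℕ) < r) (j : Fin k) :
    BVertex (fun _ => k) r :=
  ⟨⟨(x.1 : ℕ) + 1, by omega⟩,
    fun i => if h : (i : ℕ) < (x.1 : ℕ) then x.2 ⟨i, h⟩ else j⟩

lemma bchild_fst (x : BVertex (fun _ => k) r) (hx : (x.1 : ℕ) < r) (j : Fin k) :
    ((bchild x hx j).1 : ℕ) = (x.1 : ℕ) + 1 := rfl

lemma bext_child (x : BVertex (fun _ => k) r) (hx : (x.1 : ℕ) < r) (j : Fin k) :
    BExt x (bchild x hx j) := by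
  refine ⟨rfl, fun i => ?_⟩
  simp [bchild, i.isLt]

lemma bchild_injective (x : BVertex (fun _ => k) r) (hx : (x.1 : ℕ) < r) :
    Function.Injective (bchild x hx) := by
  intro j j' h
  have h2 := (Sigma.mk.inj_iff.mp h).2
  have h3 := eq_of_heq h2
  have h4 := congrFun h3 ⟨(x.1 : ℕ), Nat.lt_succ_self _⟩
  simpa [bchild] using h4

/-- The parent of a vertex (junk at the root). -/
def bparent (x : BVertex (fun _ => k) r) : BVertex (fun _ => k) r :=
  ⟨⟨(x.1 : ℕ) - 1, by have := x.1.isLt; omega⟩,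
    fun i => x.2 ⟨i, by have h : (i : ℕ) < (x.1 : ℕ) - 1 := i.isLt; omega⟩⟩

lemma bparent_fst (x : BVertex (fun _ => k) r) :
    ((bparent x).1 : ℕ) = (x.1 : ℕ) - 1 := rfl

open Classical in
lemma sum_bext_child (x : BVertex (fun _ => k) r) (g : BVertex (fun _ => k) r → ℝ) :
    ∑ y : BVertex (fun _ => k) r, (if BExt x y then g y else 0)
      = if hx : (x.1 : ℕ) < r then ∑ j : Fin k, g (bchild x hx j) else 0 := by
  split_ifs with hx
  · rw [← Finset.sum_filter]
    have himg : Finset.univ.filter (fun y => BExt x y)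
        = Finset.image (bchild x hx) Finset.univ := by
      ext y
      simp only [Finset.mem_filter, Finset.mem_image, Finset.mem_univ, true_and]
      constructor
      · rintro ⟨h1, h2⟩
        refine ⟨y.2 ⟨(x.1 : ℕ), by omega⟩, ?_⟩
        apply bvertex_ext
        · rw [bchild_fst]; omega
        · intro i hxi hyi
          by_cases h : i < (x.1 : ℕ)
          · have := h2 ⟨i, h⟩
            simp only [bchild]
            rw [dif_pos h]
            exact this.symm ▸ (this.symm)
          · have hi : i = (x.1 : ℕ) := by
              have : i < (x.1 : ℕ) + 1 := by simpa [bchild_fst] using hxi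
              omega
            subst hi
            simp [bchild]
      · rintro ⟨j, rfl⟩
        exact bext_child x hx j
    rw [himg, Finset.sum_image (fun a _ b _ h => bchild_injective x hx h)]
  · apply Finset.sum_eq_zero
    intro y _
    rw [if_neg]
    rintro ⟨h1, -⟩
    have := y.1.isLt
    omega

open Classical in
lemma sum_bext_parent (x : BVertex (fun _ => k) r) (g : BVertex (fun _ => k) r → ℝ) :
    ∑ y : BVertex (fun _ => k) r, (if BExt y x then g y else 0)
      = if 1 ≤ (x.1 : ℕ) then g (bparent x) else 0 := by
  split_ifs with hx
  · have hP : ∀ y : BVertex (fun _ => k) r, BExt y x ↔ y = bparent x := by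
      intro y
      constructor
      · rintro ⟨h1, h2⟩
        apply bvertex_ext
        · rw [bparent_fst]; omega
        · intro i hyi hpi
          have := h2 ⟨i, hyi⟩
          simp only [bparent]
          exact this ▸ rfl
      · rintro rfl
        refine ⟨by rw [bparent_fst]; omega, fun i => ?_⟩
        simp [bparent]
    simp_rw [hP]
    rw [Finset.sum_ite_eq' Finset.univ (bparent x) g]
    simp
  · apply Finset.sum_eq_zero
    intro y _
    rw [if_neg]
    rintro ⟨h1, -⟩
    omega

open Classical in
lemma sum_badj (x : BVertex (fun _ => k) r) (g : BVertex (fun _ => k) r → ℝ) :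
    ∑ y : BVertex (fun _ => k) r, (if BAdj x y then 1 else 0) * g y
      = (if hx : (x.1 : ℕ) < r then ∑ j : Fin k, g (bchild x hx j) else 0)
        + (if 1 ≤ (x.1 : ℕ) then g (bparent x) else 0) := by
  rw [← sum_bext_child x g, ← sum_bext_parent x g, ← Finset.sum_add_distrib]
  apply Finset.sum_congr rfl
  intro y _
  by_cases h1 : BExt x y <;> by_cases h2 : BExt y x
  · exfalso
    obtain ⟨e1, -⟩ := h1
    obtain ⟨e2, -⟩ := h2
    omega
  · simp [BAdj, h1, h2]
  · simp [BAdj, h1, h2]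
  · simp [BAdj, h1, h2]

end Aux

/-- Let `k ≥ 2`, `r ≥ 1`, and let `lam` be a root of `P^k_{r+2}`.
The isotropic vector `v` with `v γ = P^k_{r+1−m}(lam)` for `γ` at depth `m` is a
(nonzero) eigenvector of the adjacency matrix of `X_r^k` with eigenvalue `lam`. -/
theorem isotropic_eigenvector (k r : ℕ) (hk : 2 ≤ k) (hr : 1 ≤ r) (lam : ℝ)
    (hroot : (Ppoly k (r + 2)).IsRoot lam) :
    (fun γ : BVertex (fun _ => k) r => (Ppoly k (r + 1 - (γ.1 : ℕ))).eval lam) ≠ 0 ∧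
    (BAdjMatrix (fun _ => k) r).mulVec
        (fun γ => (Ppoly k (r + 1 - (γ.1 : ℕ))).eval lam) =
      lam • fun γ : BVertex (fun _ => k) r => (Ppoly k (r + 1 - (γ.1 : ℕ))).eval lam := by
  classical
  constructor
  · intro h
    have hleaf := congrFun h ⟨⟨r, by omega⟩, fun _ => ⟨0, by show 0 < k; omega⟩⟩
    simp only [Pi.zero_apply, Fin.val_mk] at hleaf
    rw [show r + 1 - r = 1 by omega] at hleaf
    simp [Ppoly] at hleaf
  · funext x
    have hmv : (BAdjMatrix (fun _ => k) r).mulVec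
        (fun γ => (Ppoly k (r + 1 - (γ.1 : ℕ))).eval lam) x
        = ∑ y : BVertex (fun _ => k) r,
            (if BAdj x y then 1 else 0) * (Ppoly k (r + 1 - (y.1 : ℕ))).eval lam := rfl
    rw [hmv, sum_badj x (fun y => (Ppoly k (r + 1 - (y.1 : ℕ))).eval lam)]
    simp only [bchild_fst, bparent_fst, Finset.sum_const, Finset.card_univ,
      Fintype.card_fin, nsmul_eq_mul, Pi.smul_apply, smul_eq_mul]
    set m := (x.1 : ℕ) with hm
    have hmr : m ≤ r := by have := x.1.isLt; omega
    by_cases h0 : m = 0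
    · rw [dif_pos (by omega : m < r), if_neg (by omega)]
      rw [h0]
      rw [show r + 1 - (0 + 1) = r by omega, show r + 1 - 0 = r + 1 by omega]
      have := Ppoly_eval_rec k lam r
      rw [hroot] at this
      linarith
    · by_cases hr' : m < r
      · rw [dif_pos hr', if_pos (by omega)]
        obtain ⟨d, hd⟩ : ∃ d, r = m + d := ⟨r - m, by omega⟩
        rw [show r + 1 - (m + 1) = d by omega, show r + 1 - (m - 1) = d + 2 by omega,
          show r + 1 - m = d + 1 by omega]
        have := Ppoly_eval_rec k lam d
        linarith [this]
      · have hmr' : m = r := by omega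
        rw [dif_neg (by omega), if_pos (by omega)]
        rw [hmr']
        rw [show r + 1 - (r - 1) = 2 by omega, show r + 1 - r = 1 by omega]
        simp [Ppoly]
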